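/- For all x, y ∈ 𝔹ⁿ (the open unit ball of ℝⁿ), s_{𝔹ⁿ}(x,y) ≥ |x−y|/(|x−y| + 2(1−t)), where t = max{|x|, |y|}. -/

import Mathlib

open Metric Set

/-- The triangular ratio metric `s_G(x,y) = sup_{z ∈ ∂G} |x-y|/(|x-z|+|z-y|)`. -/
noncomputable def triangularRatio {n : ℕ} (G : Set (EuclideanSpace ℝ (Fin n)))
    (x y : EuclideanSpace ℝ (Fin n)) : ℝ :=
  ⨆ z : frontier G, dist x y / (dist x z.1 + dist z.1 y)

/-- Distance to the boundary `d_G(x) = dist(x, ∂G)`. -/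
noncomputable def distBd {n : ℕ} (G : Set (EuclideanSpace ℝ (Fin n)))
    (x : EuclideanSpace ℝ (Fin n)) : ℝ :=
  Metric.infDist x (frontier G)

/-- The distance ratio metric `j_G(x,y) = log(1 + |x-y|/min{d_G(x), d_G(y)})`. -/
noncomputable def distRatio {n : ℕ} (G : Set (EuclideanSpace ℝ (Fin n)))
    (x y : EuclideanSpace ℝ (Fin n)) : ℝ :=
  Real.log (1 + dist x y / min (distBd G x) (distBd G y))

/-- The quantity `p_G(x,y) = |x-y| / √(|x-y|² + 4 d_G(x) d_G(y))`. -/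
noncomputable def pMetric {n : ℕ} (G : Set (EuclideanSpace ℝ (Fin n)))
    (x y : EuclideanSpace ℝ (Fin n)) : ℝ :=
  dist x y / Real.sqrt (dist x y ^ 2 + 4 * distBd G x * distBd G y)

/-! Pick the boundary point `z` of `𝔹ⁿ` radially closest to the point `x` of larger norm `t`:
then `|x - z| = 1 - t` and `|z - y| ≤ |z - x| + |x - y|`, so the ratio at `z` is already at least
`|x - y| / (|x - y| + 2(1 - t))`. -/

lemma NormedSpace.dist_self_normalize {V : Type*} [NormedAddCommGroup V] [NormedSpace ℝ V]
    {x : V} (hx : x ≠ 0) : dist x (normalize x) = |‖x‖ - 1| := by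
  have hsub : x - normalize x = (‖x‖ - 1) • normalize x := by
    rw [sub_smul, one_smul, norm_smul_normalize]
  rw [dist_eq_norm, hsub, norm_smul, norm_normalize hx, Real.norm_eq_abs, mul_one]

section TriangularRatio

variable {n : ℕ} (G : Set (EuclideanSpace ℝ (Fin n))) (x y : EuclideanSpace ℝ (Fin n))

lemma triangularRatio_nonneg : 0 ≤ triangularRatio G x y :=
  Real.iSup_nonneg fun _ => by positivity

lemma triangularRatio_comm : triangularRatio G x y = triangularRatio G y x := by
  unfold triangularRatio
  congr 1 with z
  rw [dist_comm x y, dist_comm x z.1, dist_comm z.1 y, add_comm]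

variable {G x y}

lemma div_le_triangularRatio {z : EuclideanSpace ℝ (Fin n)} (hz : z ∈ frontier G) :
    dist x y / (dist x z + dist z y) ≤ triangularRatio G x y := by
  have hbdd : BddAbove (range fun z : frontier G => dist x y / (dist x z.1 + dist z.1 y)) := by
    refine ⟨1, ?_⟩
    rintro r ⟨z, rfl⟩
    exact div_le_one_of_le₀ (dist_triangle x z.1 y) (by positivity)
  exact le_ciSup hbdd (⟨z, hz⟩ : frontier G)

lemma div_add_two_mul_dist_le_triangularRatio {z : EuclideanSpace ℝ (Fin n)}
    (hz : z ∈ frontier G) : dist x y / (dist x y + 2 * dist x z) ≤ triangularRatio G x y := by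
  rcases (dist_nonneg : 0 ≤ dist x y).eq_or_lt with hxy | hxy
  · rw [← hxy, zero_div]
    exact triangularRatio_nonneg G x y
  refine le_trans ?_ (div_le_triangularRatio hz)
  have hzy : dist z y ≤ dist x z + dist x y := by
    simpa only [dist_comm z x] using dist_triangle z x y
  exact div_le_div_of_nonneg_left dist_nonneg (hxy.trans_le (dist_triangle x z y)) (by linarith)

end TriangularRatio

lemma norm_sub_div_le_triangularRatio_ball {n : ℕ} {x y : EuclideanSpace ℝ (Fin n)}
    (hx : ‖x‖ < 1) (hyx : ‖y‖ ≤ ‖x‖) :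
    ‖x - y‖ / (‖x - y‖ + 2 * (1 - ‖x‖)) ≤ triangularRatio (ball 0 1) x y := by
  rcases eq_or_ne x 0 with rfl | hx0
  · rw [norm_zero, norm_le_zero_iff] at hyx
    rw [hyx, sub_self, norm_zero, zero_div]
    exact triangularRatio_nonneg _ _ _
  have hz : NormedSpace.normalize x ∈ frontier (ball (0 : EuclideanSpace ℝ (Fin n)) 1) := by
    rw [frontier_ball _ one_ne_zero, mem_sphere_zero_iff_norm]
    exact NormedSpace.norm_normalize hx0
  have hdist : dist x (NormedSpace.normalize x) = 1 - ‖x‖ := by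
    rw [NormedSpace.dist_self_normalize hx0, abs_sub_comm, abs_of_pos (by linarith)]
  simpa only [hdist, dist_eq_norm] using
    div_add_two_mul_dist_le_triangularRatio (x := x) (y := y) hz

/-- For all `x, y` in the unit ball `𝔹ⁿ`,
`s_{𝔹ⁿ}(x,y) ≥ |x-y| / (|x-y| + 2(1-t))` where `t = max{|x|,|y|}`. -/
theorem sB_ge_radial_bound {n : ℕ}
    (x y : EuclideanSpace ℝ (Fin n)) (hx : ‖x‖ < 1) (hy : ‖y‖ < 1) :
    triangularRatio (Metric.ball (0 : EuclideanSpace ℝ (Fin n)) 1) x y ≥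
      ‖x - y‖ / (‖x - y‖ + 2 * (1 - max ‖x‖ ‖y‖)) := by
  rcases le_total ‖y‖ ‖x‖ with hyx | hxy
  · rw [max_eq_left hyx]
    exact norm_sub_div_le_triangularRatio_ball hx hyx
  · rw [max_eq_right hxy, triangularRatio_comm, norm_sub_rev]
    exact norm_sub_div_le_triangularRatio_ball hy hxy
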